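/- arXiv:2409.00370 — 3 statements merged into one kernel-verified Lean document; each statement's English description precedes it below -/
import Mathlib

section
/- For p ∈ [1,∞) and 1 ≤ q₁ < q₂ ≤ ∞, |φ_{G,p,q₂}(x) - φ_{G,p,q₁}(x)| ≤ (ν_E^{p/q₁} - ν_E^{p/q₂}) φ_{G,p}(x) for all x ∈ ℝ^N, where φ_{G,p,∞} := φ_{G,p} and ν_E = max_{e∈E} #e(#e-1)/2. In particular |φ_{G,p}(x) - φ_{G,p,q}(x)| ≤ (ν_E^{p/q} - 1) φ_{G,p}(x). -/
open Finset Real Filter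
open scoped RealInnerProductSpace

/-- generalized edge gradient: `f_{e,q}(x) = (Σ_{i<j, i,j∈e} |x_i - x_j|^q)^{1/q}` -/
noncomputable def feq {N : ℕ} (q : ℝ) (e : Finset (Fin N)) (x : EuclideanSpace ℝ (Fin N)) : ℝ :=
  (∑ p ∈ (e ×ˢ e).filter (fun p => p.1 < p.2), |x p.1 - x p.2| ^ q) ^ (1/q)

/-- `f_e(x) = max_{i,j ∈ e} |x_i - x_j|` -/
noncomputable def femax {N : ℕ} (e : Finset (Fin N)) (x : EuclideanSpace ℝ (Fin N)) : ℝ :=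
  ⨆ p ∈ (e ×ˢ e : Finset (Fin N × Fin N)), |x p.1 - x p.2|

/-- `φ_{G,p,q}(x) = (1/p) Σ_{e∈E} w(e) f_{e,q}(x)^p` -/
noncomputable def phiq {N : ℕ} (E : Finset (Finset (Fin N))) (w : Finset (Fin N) → ℝ)
    (p q : ℝ) (x : EuclideanSpace ℝ (Fin N)) : ℝ :=
  (1/p) * ∑ e ∈ E, w e * feq q e x ^ p

/-- `φ_{G,p}(x) = (1/p) Σ_{e∈E} w(e) f_e(x)^p` -/
noncomputable def phim {N : ℕ} (E : Finset (Finset (Fin N))) (w : Finset (Fin N) → ℝ)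
    (p : ℝ) (x : EuclideanSpace ℝ (Fin N)) : ℝ :=
  (1/p) * ∑ e ∈ E, w e * femax e x ^ p

/-- `ν_E = max_{e∈E} #e(#e-1)/2` -/
def nuE {N : ℕ} (E : Finset (Finset (Fin N))) : ℕ :=
  E.sup fun e => e.card * (e.card - 1) / 2

/-- `i` and `j` are joined by a chain of `k` hyperedges of `E`. -/
def chained {N : ℕ} (E : Finset (Finset (Fin N))) (i j : Fin N) (k : ℕ) : Prop :=
  ∃ μ : ℕ → Fin N, μ 0 = i ∧ μ k = j ∧ ∀ l < k, ∃ e ∈ E, μ l ∈ e ∧ μ (l + 1) ∈ e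

/-- hypergraph distance: minimal chain length -/
noncomputable def hdist {N : ℕ} (E : Finset (Finset (Fin N))) (i j : Fin N) : ℕ :=
  sInf {k | chained E i j k}

/-- hypergraph diameter -/
noncomputable def hdiam {N : ℕ} (E : Finset (Finset (Fin N))) : ℕ :=
  Finset.univ.sup fun i => Finset.univ.sup fun j => hdist E i j

/-- mean-value vector `x̄` -/
noncomputable def meanVec {N : ℕ} (z : EuclideanSpace ℝ (Fin N)) : EuclideanSpace ℝ (Fin N) :=
  WithLp.toLp 2 (fun _ => (∑ i, z i) / N)

lemma le_femax {N : ℕ} (e : Finset (Fin N)) (x : EuclideanSpace ℝ (Fin N))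
    {pr : Fin N × Fin N} (h : pr ∈ e ×ˢ e) : |x pr.1 - x pr.2| ≤ femax e x := by
  unfold femax
  have hbdd : BddAbove (Set.range fun p : Fin N × Fin N =>
      ⨆ _ : p ∈ e ×ˢ e, |x p.1 - x p.2|) := Set.Finite.bddAbove (Set.finite_range _)
  have h1 : |x pr.1 - x pr.2| = ⨆ _ : pr ∈ e ×ˢ e, |x pr.1 - x pr.2| := by
    rw [ciSup_pos h]
  rw [h1]
  exact le_ciSup hbdd pr

lemma femax_le {N : ℕ} (e : Finset (Fin N)) (x : EuclideanSpace ℝ (Fin N)) {b : ℝ} (hb : 0 ≤ b)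
    (h : ∀ pr ∈ e ×ˢ e, |x pr.1 - x pr.2| ≤ b) : femax e x ≤ b := by
  unfold femax
  refine Real.iSup_le (fun pr => ?_) hb
  by_cases hpr : pr ∈ e ×ˢ e
  · rw [ciSup_pos hpr]; exact h pr hpr
  · simp only [hpr]
    have : IsEmpty (pr ∈ e ×ˢ e) := ⟨hpr⟩
    rw [Real.iSup_of_isEmpty]
    exact hb

lemma femax_nonneg {N : ℕ} {e : Finset (Fin N)} (he : e.Nonempty)
    (x : EuclideanSpace ℝ (Fin N)) : 0 ≤ femax e x := by
  obtain ⟨i, hi⟩ := he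
  have := le_femax e x (pr := (i, i)) (Finset.mem_product.mpr ⟨hi, hi⟩)
  simpa using this.trans' (by simp)

lemma feq_nonneg {N : ℕ} (q : ℝ) (e : Finset (Fin N)) (x : EuclideanSpace ℝ (Fin N)) :
    0 ≤ feq q e x :=
  Real.rpow_nonneg (Finset.sum_nonneg fun p _ => Real.rpow_nonneg (abs_nonneg _) _) _

lemma term_le_feq {N : ℕ} {q : ℝ} (hq : 0 < q) (e : Finset (Fin N))
    (x : EuclideanSpace ℝ (Fin N)) {pr : Fin N × Fin N}
    (h : pr ∈ (e ×ˢ e).filter (fun p => p.1 < p.2)) : |x pr.1 - x pr.2| ≤ feq q e x := by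
  have h1 : |x pr.1 - x pr.2| = (|x pr.1 - x pr.2| ^ q) ^ (1/q) := by
    rw [one_div, Real.rpow_rpow_inv (abs_nonneg _) hq.ne']
  rw [h1]
  unfold feq
  refine Real.rpow_le_rpow (Real.rpow_nonneg (abs_nonneg _) _) ?_ (by positivity)
  exact Finset.single_le_sum (f := fun p : Fin N × Fin N => |x p.1 - x p.2| ^ q)
    (fun p _ => Real.rpow_nonneg (abs_nonneg _) _) h

lemma femax_le_feq {N : ℕ} {q : ℝ} (hq : 0 < q) (e : Finset (Fin N))
    (x : EuclideanSpace ℝ (Fin N)) : femax e x ≤ feq q e x := by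
  refine femax_le e x (feq_nonneg q e x) (fun pr hpr => ?_)
  rw [Finset.mem_product] at hpr
  rcases lt_trichotomy pr.1 pr.2 with hlt | heq | hgt
  · exact term_le_feq hq e x (Finset.mem_filter.mpr ⟨Finset.mem_product.mpr hpr, hlt⟩)
  · rw [heq, sub_self, abs_zero]; exact feq_nonneg q e x
  · have := term_le_feq hq e x (pr := (pr.2, pr.1))
      (Finset.mem_filter.mpr ⟨Finset.mem_product.mpr ⟨hpr.2, hpr.1⟩, hgt⟩)
    simpa [abs_sub_comm] using this

lemma feq_le_card_mul {N : ℕ} {q : ℝ} (hq : 0 < q) {e : Finset (Fin N)} (he : e.Nonempty)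
    (x : EuclideanSpace ℝ (Fin N)) :
    feq q e x ≤ ((((e ×ˢ e).filter (fun p => p.1 < p.2)).card : ℝ)) ^ (1/q) * femax e x := by
  set s := (e ×ˢ e).filter (fun p => p.1 < p.2) with hs
  have hM : 0 ≤ femax e x := femax_nonneg he x
  have hsum : ∑ p ∈ s, |x p.1 - x p.2| ^ q ≤ (s.card : ℝ) * femax e x ^ q := by
    calc ∑ p ∈ s, |x p.1 - x p.2| ^ q ≤ ∑ _p ∈ s, femax e x ^ q := by
          refine Finset.sum_le_sum (fun p hp => ?_)
          exact Real.rpow_le_rpow (abs_nonneg _)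
            (le_femax e x (Finset.mem_filter.mp hp).1) hq.le
      _ = (s.card : ℝ) * femax e x ^ q := by rw [Finset.sum_const, nsmul_eq_mul]
  have := Real.rpow_le_rpow (Finset.sum_nonneg fun p _ => Real.rpow_nonneg (abs_nonneg _) _)
    hsum (by positivity : (0:ℝ) ≤ 1/q)
  refine this.trans (le_of_eq ?_)
  rw [Real.mul_rpow (Nat.cast_nonneg _) (Real.rpow_nonneg hM _), one_div,
    Real.rpow_rpow_inv hM hq.ne']

lemma feq_anti {N : ℕ} {q₁ q₂ : ℝ} (hq1 : 0 < q₁) (h12 : q₁ < q₂) (e : Finset (Fin N))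
    (x : EuclideanSpace ℝ (Fin N)) : feq q₂ e x ≤ feq q₁ e x := by
  set s := (e ×ˢ e).filter (fun p => p.1 < p.2) with hs
  set A := feq q₁ e x with hA
  have hq2 : 0 < q₂ := hq1.trans h12
  have hA0 : 0 ≤ A := feq_nonneg q₁ e x
  have hS1 : A ^ q₁ = ∑ p ∈ s, |x p.1 - x p.2| ^ q₁ := by
    rw [hA]; unfold feq
    rw [one_div, Real.rpow_inv_rpow (Finset.sum_nonneg fun p _ =>
      Real.rpow_nonneg (abs_nonneg _) _) hq1.ne']
  have hkey : ∑ p ∈ s, |x p.1 - x p.2| ^ q₂ ≤ A ^ q₂ := by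
    have : ∀ p ∈ s, |x p.1 - x p.2| ^ q₂ ≤ |x p.1 - x p.2| ^ q₁ * A ^ (q₂ - q₁) := by
      intro p hp
      have ha : 0 ≤ |x p.1 - x p.2| := abs_nonneg _
      have haA : |x p.1 - x p.2| ≤ A := term_le_feq hq1 e x hp
      calc |x p.1 - x p.2| ^ q₂ = |x p.1 - x p.2| ^ (q₁ + (q₂ - q₁)) := by ring_nf
        _ = |x p.1 - x p.2| ^ q₁ * |x p.1 - x p.2| ^ (q₂ - q₁) :=
            Real.rpow_add' ha (by linarith)
        _ ≤ |x p.1 - x p.2| ^ q₁ * A ^ (q₂ - q₁) :=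
            mul_le_mul_of_nonneg_left
              (Real.rpow_le_rpow ha haA (by linarith : (0:ℝ) ≤ q₂ - q₁))
              (Real.rpow_nonneg ha _)
    calc ∑ p ∈ s, |x p.1 - x p.2| ^ q₂ ≤ ∑ p ∈ s, |x p.1 - x p.2| ^ q₁ * A ^ (q₂ - q₁) :=
          Finset.sum_le_sum this
      _ = A ^ q₁ * A ^ (q₂ - q₁) := by rw [← Finset.sum_mul, ← hS1]
      _ = A ^ q₂ := by rw [← Real.rpow_add' hA0 (by linarith)]; ring_nf
  have := Real.rpow_le_rpow (Finset.sum_nonneg fun p _ => Real.rpow_nonneg (abs_nonneg _) _)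
    hkey (by positivity : (0:ℝ) ≤ 1/q₂)
  calc feq q₂ e x = (∑ p ∈ s, |x p.1 - x p.2| ^ q₂) ^ (1/q₂) := rfl
    _ ≤ (A ^ q₂) ^ (1/q₂) := this
    _ = A := by rw [one_div, Real.rpow_rpow_inv hA0 hq2.ne']

lemma feq_le_rpow_mul {N : ℕ} {q₁ q₂ : ℝ} (hq1 : 0 < q₁) (h12 : q₁ < q₂) {e : Finset (Fin N)}
    (hsne : ((e ×ˢ e).filter (fun p => p.1 < p.2)).Nonempty) (x : EuclideanSpace ℝ (Fin N)) :
    feq q₁ e x ≤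
      ((((e ×ˢ e).filter (fun p => p.1 < p.2)).card : ℝ)) ^ (1/q₁ - 1/q₂) * feq q₂ e x := by
  set s := (e ×ˢ e).filter (fun p => p.1 < p.2) with hs
  set n : ℝ := (s.card : ℝ) with hn
  have hn0 : 0 < n := by rw [hn]; exact Nat.cast_pos.mpr (Finset.card_pos.mpr hsne)
  have hq2 : 0 < q₂ := hq1.trans h12
  set S₁ := ∑ p ∈ s, |x p.1 - x p.2| ^ q₁ with hS1
  set S₂ := ∑ p ∈ s, |x p.1 - x p.2| ^ q₂ with hS2
  have hS1n : 0 ≤ S₁ := Finset.sum_nonneg fun p _ => Real.rpow_nonneg (abs_nonneg _) _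
  have hS2n : 0 ≤ S₂ := Finset.sum_nonneg fun p _ => Real.rpow_nonneg (abs_nonneg _) _
  have hmain : (n⁻¹ * S₁) ^ (q₂/q₁) ≤ n⁻¹ * S₂ := by
    have h := Real.rpow_arith_mean_le_arith_mean_rpow s (fun _ => n⁻¹)
      (fun p => |x p.1 - x p.2| ^ q₁) (fun _ _ => by positivity)
      (by rw [Finset.sum_const, nsmul_eq_mul, ← hn, mul_inv_cancel₀ hn0.ne'])
      (fun p _ => Real.rpow_nonneg (abs_nonneg _) _)
      ((one_le_div hq1).mpr h12.le)
    calc (n⁻¹ * S₁) ^ (q₂/q₁) = (∑ p ∈ s, n⁻¹ * |x p.1 - x p.2| ^ q₁) ^ (q₂/q₁) := by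
          rw [← Finset.mul_sum]
      _ ≤ ∑ p ∈ s, n⁻¹ * (|x p.1 - x p.2| ^ q₁) ^ (q₂/q₁) := h
      _ = n⁻¹ * S₂ := by
          rw [← Finset.mul_sum]
          congr 1
          refine Finset.sum_congr rfl fun p _ => ?_
          rw [← Real.rpow_mul (abs_nonneg _)]
          congr 1
          field_simp
  have step : (n⁻¹ * S₁) ^ (1/q₁) ≤ (n⁻¹ * S₂) ^ (1/q₂) := by
    have h1 : (n⁻¹ * S₁) ^ (1/q₁) = ((n⁻¹ * S₁) ^ (q₂/q₁)) ^ (1/q₂) := by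
      rw [← Real.rpow_mul (by positivity)]
      congr 1
      field_simp
    rw [h1]
    exact Real.rpow_le_rpow (Real.rpow_nonneg (by positivity) _) hmain (by positivity)
  have hfeq2 : feq q₂ e x = S₂ ^ (1/q₂) := rfl
  calc feq q₁ e x = S₁ ^ (1/q₁) := rfl
    _ = n ^ (1/q₁) * (n⁻¹ * S₁) ^ (1/q₁) := by
        rw [← Real.mul_rpow hn0.le (by positivity), ← mul_assoc, mul_inv_cancel₀ hn0.ne', one_mul]
    _ ≤ n ^ (1/q₁) * (n⁻¹ * S₂) ^ (1/q₂) :=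
        mul_le_mul_of_nonneg_left step (Real.rpow_nonneg hn0.le _)
    _ = n ^ (1/q₁ - 1/q₂) * feq q₂ e x := by
        rw [Real.mul_rpow (by positivity) hS2n, Real.inv_rpow hn0.le, Real.rpow_sub hn0, hfeq2]
        ring

lemma pairs_nonempty {N : ℕ} {e : Finset (Fin N)} (he : 2 ≤ e.card) :
    ((e ×ˢ e).filter (fun p => p.1 < p.2)).Nonempty := by
  obtain ⟨a, ha, b, hb, hab⟩ := Finset.one_lt_card.mp he
  rcases lt_or_gt_of_ne hab with h|h
  · exact ⟨(a,b), Finset.mem_filter.mpr ⟨Finset.mem_product.mpr ⟨ha,hb⟩, h⟩⟩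
  · exact ⟨(b,a), Finset.mem_filter.mpr ⟨Finset.mem_product.mpr ⟨hb,ha⟩, h⟩⟩

lemma card_pairs {N : ℕ} (e : Finset (Fin N)) :
    ((e ×ˢ e).filter (fun p => p.1 < p.2)).card = e.card * (e.card - 1) / 2 := by
  set s₁ := (e ×ˢ e).filter (fun p => p.1 < p.2) with hs1
  set s₂ := (e ×ˢ e).filter (fun p => p.2 < p.1) with hs2
  have hcard : s₂.card = s₁.card := by
    refine Finset.card_bij' (fun p _ => p.swap) (fun p _ => p.swap) ?_ ?_ ?_ ?_
    · intro p hp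
      simp only [hs1, hs2, Finset.mem_filter, Finset.mem_product] at hp ⊢
      exact ⟨⟨hp.1.2, hp.1.1⟩, hp.2⟩
    · intro p hp
      simp only [hs1, hs2, Finset.mem_filter, Finset.mem_product] at hp ⊢
      exact ⟨⟨hp.1.2, hp.1.1⟩, hp.2⟩
    · intro p _; rfl
    · intro p _; rfl
  have hdisj : Disjoint s₁ s₂ := by
    rw [Finset.disjoint_left]
    intro p hp1 hp2
    simp only [hs1, hs2, Finset.mem_filter] at hp1 hp2
    exact absurd hp2.2 (asymm hp1.2)
  have hunion : s₁ ∪ s₂ = e.offDiag := by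
    ext p
    simp only [hs1, hs2, Finset.mem_union, Finset.mem_filter, Finset.mem_product,
      Finset.mem_offDiag]
    constructor
    · rintro (⟨⟨h1,h2⟩,h3⟩|⟨⟨h1,h2⟩,h3⟩)
      · exact ⟨h1, h2, ne_of_lt h3⟩
      · exact ⟨h1, h2, (ne_of_lt h3).symm⟩
    · rintro ⟨h1, h2, h3⟩
      rcases lt_or_gt_of_ne h3 with h|h
      · exact Or.inl ⟨⟨h1,h2⟩,h⟩
      · exact Or.inr ⟨⟨h1,h2⟩,h⟩
  have h2 : s₁.card + s₂.card = e.card * e.card - e.card := by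
    rw [← Finset.card_union_of_disjoint hdisj, hunion, Finset.offDiag_card]
  have hmul : e.card * (e.card - 1) = e.card * e.card - e.card := by
    rw [Nat.mul_sub, mul_one]
  rw [hmul]
  generalize hm : e.card * e.card = m at h2 ⊢
  omega

lemma edge_basic {N : ℕ} {E : Finset (Finset (Fin N))} {e : Finset (Fin N)} (heE : e ∈ E)
    (he : 2 ≤ e.card) :
    (((e ×ˢ e).filter (fun p => p.1 < p.2)).card : ℝ) ≤ (nuE E : ℝ) ∧ (1:ℝ) ≤ (nuE E : ℝ) := by
  have h1 : ((e ×ˢ e).filter (fun p => p.1 < p.2)).card ≤ nuE E := by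
    rw [card_pairs]
    exact Finset.le_sup (f := fun e : Finset (Fin N) => e.card * (e.card - 1) / 2) heE
  have h2 : 1 ≤ ((e ×ˢ e).filter (fun p => p.1 < p.2)).card :=
    Finset.card_pos.mpr (pairs_nonempty he)
  exact ⟨Nat.cast_le.mpr h1, by exact_mod_cast h2.trans h1⟩

lemma edge_pow_bounds {N : ℕ} {E : Finset (Finset (Fin N))} {e : Finset (Fin N)} (heE : e ∈ E)
    (he : 2 ≤ e.card) (x : EuclideanSpace ℝ (Fin N)) {p q : ℝ} (hp : 1 ≤ p) (hq : 0 < q) :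
    femax e x ^ p ≤ feq q e x ^ p ∧
    feq q e x ^ p ≤ (nuE E : ℝ) ^ (p/q) * femax e x ^ p := by
  have hene : e.Nonempty := Finset.card_pos.mp (by omega)
  have hM := femax_nonneg hene x
  obtain ⟨hnν, hν1⟩ := edge_basic heE he
  constructor
  · exact Real.rpow_le_rpow hM (femax_le_feq hq e x) (by linarith)
  · have h1 : feq q e x ≤ (nuE E : ℝ) ^ (1/q) * femax e x :=
      (feq_le_card_mul hq hene x).trans
        (mul_le_mul_of_nonneg_right
          (Real.rpow_le_rpow (Nat.cast_nonneg _) hnν (by positivity)) hM)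
    have h2 := Real.rpow_le_rpow (feq_nonneg q e x) h1 (by linarith : (0:ℝ) ≤ p)
    refine h2.trans (le_of_eq ?_)
    rw [Real.mul_rpow (Real.rpow_nonneg (by positivity) _) hM,
      ← Real.rpow_mul (by positivity), show (1/q)*p = p/q by ring]

lemma edge_diff_bound {N : ℕ} {E : Finset (Finset (Fin N))} {e : Finset (Fin N)} (heE : e ∈ E)
    (he : 2 ≤ e.card) (x : EuclideanSpace ℝ (Fin N)) {p q₁ q₂ : ℝ}
    (hp : 1 ≤ p) (hq1 : 1 ≤ q₁) (h12 : q₁ < q₂) :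
    0 ≤ feq q₁ e x ^ p - feq q₂ e x ^ p ∧
    feq q₁ e x ^ p - feq q₂ e x ^ p ≤
      ((nuE E : ℝ) ^ (p/q₁) - (nuE E : ℝ) ^ (p/q₂)) * femax e x ^ p := by
  have hq1' : 0 < q₁ := lt_of_lt_of_le one_pos hq1
  have hq2' : 0 < q₂ := hq1'.trans h12
  have hene : e.Nonempty := Finset.card_pos.mp (by omega)
  have hsne := pairs_nonempty he
  obtain ⟨hnν, hν1⟩ := edge_basic heE he
  have hM := femax_nonneg hene x
  have hF2 := feq_nonneg q₂ e x
  have hexp : (0:ℝ) ≤ p/q₁ - p/q₂ := by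
    rw [sub_nonneg]
    apply div_le_div_of_nonneg_left (by linarith) hq1' h12.le
  have hexp2 : (0:ℝ) ≤ 1/q₁ - 1/q₂ := by
    rw [sub_nonneg]
    apply div_le_div_of_nonneg_left (by linarith) hq1' h12.le
  have hanti : feq q₂ e x ≤ feq q₁ e x := feq_anti hq1' h12 e x
  constructor
  · have := Real.rpow_le_rpow hF2 hanti (by linarith : (0:ℝ) ≤ p)
    linarith
  · have hkey : feq q₁ e x ^ p ≤ (nuE E:ℝ) ^ (p/q₁ - p/q₂) * feq q₂ e x ^ p := by
      have h1' : feq q₁ e x ≤ (nuE E:ℝ) ^ (1/q₁ - 1/q₂) * feq q₂ e x :=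
        (feq_le_rpow_mul hq1' h12 hsne x).trans
          (mul_le_mul_of_nonneg_right
            (Real.rpow_le_rpow (Nat.cast_nonneg _) hnν hexp2) hF2)
      have h2 := Real.rpow_le_rpow (feq_nonneg q₁ e x) h1' (by linarith : (0:ℝ) ≤ p)
      refine h2.trans (le_of_eq ?_)
      rw [Real.mul_rpow (Real.rpow_nonneg (by positivity) _) hF2,
        ← Real.rpow_mul (by positivity), show (1/q₁-1/q₂)*p = p/q₁ - p/q₂ by ring]
    have hF2M : feq q₂ e x ^ p ≤ (nuE E:ℝ) ^ (p/q₂) * femax e x ^ p :=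
      (edge_pow_bounds heE he x hp hq2').2
    have hone : (1:ℝ) ≤ (nuE E:ℝ) ^ (p/q₁ - p/q₂) := Real.one_le_rpow hν1 hexp
    have hadd : (nuE E:ℝ) ^ (p/q₁ - p/q₂) * (nuE E:ℝ) ^ (p/q₂) = (nuE E:ℝ) ^ (p/q₁) := by
      rw [← Real.rpow_add (by linarith : (0:ℝ) < (nuE E:ℝ))]
      ring_nf
    calc feq q₁ e x ^ p - feq q₂ e x ^ p
        ≤ (nuE E:ℝ)^(p/q₁-p/q₂) * feq q₂ e x ^ p - feq q₂ e x ^ p := by linarith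
      _ = ((nuE E:ℝ)^(p/q₁-p/q₂) - 1) * feq q₂ e x ^ p := by ring
      _ ≤ ((nuE E:ℝ)^(p/q₁-p/q₂) - 1) * ((nuE E:ℝ)^(p/q₂) * femax e x ^ p) :=
          mul_le_mul_of_nonneg_left hF2M (by linarith)
      _ = _ := by rw [← hadd]; ring

theorem stmt4 (N : ℕ) (E : Finset (Finset (Fin N))) (hE : ∀ e ∈ E, 2 ≤ e.card)
    (w : Finset (Fin N) → ℝ) (hw : ∀ e ∈ E, 0 < w e) (p : ℝ) (hp : 1 ≤ p) :
    (∀ q₁ q₂ : ℝ, 1 ≤ q₁ → q₁ < q₂ → ∀ x : EuclideanSpace ℝ (Fin N),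
      |phiq E w p q₂ x - phiq E w p q₁ x| ≤
        ((nuE E : ℝ) ^ (p/q₁) - (nuE E : ℝ) ^ (p/q₂)) * phim E w p x) ∧
    (∀ q : ℝ, 1 ≤ q → ∀ x : EuclideanSpace ℝ (Fin N),
      |phim E w p x - phiq E w p q x| ≤ ((nuE E : ℝ) ^ (p/q) - 1) * phim E w p x) := by
  have hp0 : 0 < p := lt_of_lt_of_le one_pos hp
  constructor
  · intro q₁ q₂ hq1 h12 x
    have hedge := fun e (heE : e ∈ E) => edge_diff_bound heE (hE e heE) x hp hq1 h12
    have hdiff : phiq E w p q₁ x - phiq E w p q₂ x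
        = (1/p) * ∑ e ∈ E, w e * (feq q₁ e x ^ p - feq q₂ e x ^ p) := by
      unfold phiq
      rw [← mul_sub, ← Finset.sum_sub_distrib]
      congr 1
      exact Finset.sum_congr rfl fun e _ => by ring
    have hnn : 0 ≤ phiq E w p q₁ x - phiq E w p q₂ x := by
      rw [hdiff]
      exact mul_nonneg (by positivity)
        (Finset.sum_nonneg fun e heE => mul_nonneg (hw e heE).le (hedge e heE).1)
    have habs : |phiq E w p q₂ x - phiq E w p q₁ x| = phiq E w p q₁ x - phiq E w p q₂ x := by
      rw [abs_sub_comm, abs_of_nonneg hnn]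
    rw [habs, hdiff]
    calc (1/p) * ∑ e ∈ E, w e * (feq q₁ e x ^ p - feq q₂ e x ^ p)
        ≤ (1/p) * ∑ e ∈ E, w e *
            (((nuE E:ℝ)^(p/q₁) - (nuE E:ℝ)^(p/q₂)) * femax e x ^ p) := by
          refine mul_le_mul_of_nonneg_left ?_ (by positivity)
          exact Finset.sum_le_sum fun e heE =>
            mul_le_mul_of_nonneg_left (hedge e heE).2 (hw e heE).le
      _ = ((nuE E:ℝ)^(p/q₁) - (nuE E:ℝ)^(p/q₂)) * phim E w p x := by
          have h : ∑ e ∈ E, w e * (((nuE E:ℝ)^(p/q₁) - (nuE E:ℝ)^(p/q₂)) * femax e x ^ p)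
              = ((nuE E:ℝ)^(p/q₁) - (nuE E:ℝ)^(p/q₂)) * ∑ e ∈ E, w e * femax e x ^ p := by
            rw [Finset.mul_sum]
            exact Finset.sum_congr rfl fun e _ => by ring
          rw [h]; unfold phim; ring
  · intro q hq x
    have hq' : 0 < q := lt_of_lt_of_le one_pos hq
    have hedge := fun e (heE : e ∈ E) => edge_pow_bounds heE (hE e heE) x hp hq'
    have hdiff : phiq E w p q x - phim E w p x
        = (1/p) * ∑ e ∈ E, w e * (feq q e x ^ p - femax e x ^ p) := by
      unfold phiq phim
      rw [← mul_sub, ← Finset.sum_sub_distrib]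
      congr 1
      exact Finset.sum_congr rfl fun e _ => by ring
    have hnn : 0 ≤ phiq E w p q x - phim E w p x := by
      rw [hdiff]
      refine mul_nonneg (by positivity)
        (Finset.sum_nonneg fun e heE => mul_nonneg (hw e heE).le ?_)
      have := (hedge e heE).1
      linarith
    have habs : |phim E w p x - phiq E w p q x| = phiq E w p q x - phim E w p x := by
      rw [abs_sub_comm, abs_of_nonneg hnn]
    rw [habs, hdiff]
    calc (1/p) * ∑ e ∈ E, w e * (feq q e x ^ p - femax e x ^ p)
        ≤ (1/p) * ∑ e ∈ E, w e * (((nuE E:ℝ)^(p/q) - 1) * femax e x ^ p) := by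
          refine mul_le_mul_of_nonneg_left ?_ (by positivity)
          refine Finset.sum_le_sum fun e heE => mul_le_mul_of_nonneg_left ?_ (hw e heE).le
          have := (hedge e heE).2
          linarith
      _ = ((nuE E:ℝ)^(p/q) - 1) * phim E w p x := by
          have h : ∑ e ∈ E, w e * (((nuE E:ℝ)^(p/q) - 1) * femax e x ^ p)
              = ((nuE E:ℝ)^(p/q) - 1) * ∑ e ∈ E, w e * femax e x ^ p := by
            rw [Finset.mul_sum]
            exact Finset.sum_congr rfl fun e _ => by ring
          rw [h]; unfold phim; ring
end

section
/- Let p, q > 1 and suppose the hypergraph G is connected. Then with γ_{G,p} := (min_{e∈E} w(e)) / (N^p · diam_G^{p-1}) and Γ_{G,p} := (Σ_{e∈E} w(e) (#e)^p) N^{p/2}, one has the Poincaré–Wirtinger type inequality γ_{G,p} ‖x - x̄‖^p ≤ p φ_{G,p,q}(x) ≤ Γ_{G,p} ‖x - x̄‖^p for all x ∈ ℝ^N, where x̄ is the constant vector whose entries all equal (1/N)Σ_i x_i. -/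
open Finset Real Filter
open scoped RealInnerProductSpace

lemma rpow_q_le_sum {N : ℕ} {q : ℝ} (hq0 : 0 < q) {e : Finset (Fin N)} {i j : Fin N}
    (hmem : (i, j) ∈ (e ×ˢ e).filter (fun p => p.1 < p.2)) (x : EuclideanSpace ℝ (Fin N)) :
    |x i - x j| ≤ feq q e x := by
  have hle : |x i - x j| ^ q ≤ ∑ p ∈ (e ×ˢ e).filter (fun p => p.1 < p.2), |x p.1 - x p.2| ^ q :=
    Finset.single_le_sum (f := fun p : Fin N × Fin N => |x p.1 - x p.2| ^ q)
      (fun _ _ => Real.rpow_nonneg (abs_nonneg _) q) hmem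
  have h2 := Real.rpow_le_rpow (Real.rpow_nonneg (abs_nonneg _) q) hle
    (by positivity : (0:ℝ) ≤ 1/q)
  rwa [← Real.rpow_mul (abs_nonneg _), mul_one_div, div_self hq0.ne', Real.rpow_one] at h2

lemma abs_sub_le_feq {N : ℕ} {q : ℝ} (hq : 0 < q) {e : Finset (Fin N)} {i j : Fin N}
    (hi : i ∈ e) (hj : j ∈ e) (x : EuclideanSpace ℝ (Fin N)) :
    |x i - x j| ≤ feq q e x := by
  rcases lt_trichotomy i j with h | h | h
  · exact rpow_q_le_sum hq (by simp [Finset.mem_filter, Finset.mem_product, hi, hj, h]) x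
  · subst h; simpa using feq_nonneg q e x
  · rw [abs_sub_comm]
    exact rpow_q_le_sum hq (by simp [Finset.mem_filter, Finset.mem_product, hi, hj, h]) x

lemma sum_rpow_le_rpow_sum {ι : Type*} {s : Finset ι} {f : ι → ℝ} {q : ℝ}
    (hq : 1 ≤ q) (hf : ∀ i ∈ s, 0 ≤ f i) :
    ∑ i ∈ s, f i ^ q ≤ (∑ i ∈ s, f i) ^ q := by
  have hq0 : 0 < q := by linarith
  have hS : 0 ≤ ∑ i ∈ s, f i := Finset.sum_nonneg hf
  rcases eq_or_lt_of_le hS with hS0 | hSpos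
  · have : ∀ i ∈ s, f i = 0 := by
      intro i hi
      exact le_antisymm (by
        have := Finset.sum_eq_zero_iff_of_nonneg hf |>.mp hS0.symm
        exact le_of_eq (this i hi)) (hf i hi)
    rw [Finset.sum_congr rfl (fun i hi => by rw [this i hi, Real.zero_rpow hq0.ne']),
      Finset.sum_const, smul_zero, ← hS0, Real.zero_rpow hq0.ne']
  · calc ∑ i ∈ s, f i ^ q ≤ ∑ i ∈ s, f i * (∑ j ∈ s, f j) ^ (q - 1) := by
          apply Finset.sum_le_sum
          intro i hi
          rcases eq_or_lt_of_le (hf i hi) with h0 | hpos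
          · rw [← h0, Real.zero_rpow hq0.ne', zero_mul]
          · have hle : f i ≤ ∑ j ∈ s, f j := Finset.single_le_sum hf hi
            calc f i ^ q = f i * f i ^ (q - 1) := by
                  rw [← Real.rpow_one_add' (le_of_lt hpos) (by linarith)]
                  ring_nf
              _ ≤ f i * (∑ j ∈ s, f j) ^ (q - 1) := by
                  apply mul_le_mul_of_nonneg_left _ (hf i hi)
                  exact Real.rpow_le_rpow (le_of_lt hpos) hle (by linarith)
      _ = (∑ i ∈ s, f i) ^ q := by
          rw [← Finset.sum_mul, ← Real.rpow_one_add' hS (by linarith)]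
          ring_nf

-- step 6
lemma sum_abs_le_sqrt_mul_norm {N : ℕ} (e : Finset (Fin N)) (y : EuclideanSpace ℝ (Fin N)) :
    ∑ i ∈ e, |y i| ≤ Real.sqrt e.card * ‖y‖ := by
  have h1 : (∑ i ∈ e, |y i|) ^ 2 ≤ (e.card : ℝ) * ∑ i ∈ e, |y i| ^ 2 := by
    exact_mod_cast sq_sum_le_card_mul_sum_sq (f := fun i => |y i|) (s := e)
  have h2 : ∑ i ∈ e, |y i| ^ 2 ≤ ‖y‖ ^ 2 := by
    rw [EuclideanSpace.norm_eq, Real.sq_sqrt (by positivity)]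
    apply Finset.sum_le_sum_of_subset_of_nonneg (Finset.subset_univ e)
    intro i _ _; positivity
  have h3 : (∑ i ∈ e, |y i|) ^ 2 ≤ (e.card : ℝ) * ‖y‖ ^ 2 :=
    h1.trans (by apply mul_le_mul_of_nonneg_left h2 (by positivity))
  have h4 : ∑ i ∈ e, |y i| ≤ Real.sqrt ((e.card : ℝ) * ‖y‖ ^ 2) := by
    rw [← Real.sqrt_sq (Finset.sum_nonneg fun i _ => abs_nonneg _)]
    exact Real.sqrt_le_sqrt h3
  rwa [Real.sqrt_mul (by positivity), Real.sqrt_sq (norm_nonneg _)] at h4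

lemma pair_sum_le {N : ℕ} (e : Finset (Fin N)) (a : Fin N → ℝ) (ha : ∀ i, 0 ≤ a i) :
    ∑ p ∈ (e ×ˢ e).filter (fun p => p.1 < p.2), (a p.1 + a p.2)
      ≤ (e.card : ℝ) * ∑ i ∈ e, a i := by
  rw [Finset.sum_add_distrib]
  have hswap : ∑ p ∈ (e ×ˢ e).filter (fun p => p.1 < p.2), a p.2
      = ∑ p ∈ (e ×ˢ e).filter (fun p => p.2 < p.1), a p.1 := by
    apply Finset.sum_nbij' (fun p => Prod.swap p) (fun p => Prod.swap p)
    · intro p hp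
      simp only [Finset.mem_filter, Finset.mem_product] at hp ⊢
      exact ⟨⟨hp.1.2, hp.1.1⟩, hp.2⟩
    · intro p hp
      simp only [Finset.mem_filter, Finset.mem_product] at hp ⊢
      exact ⟨⟨hp.1.2, hp.1.1⟩, hp.2⟩
    · intro p _; simp
    · intro p _; simp
    · intro p _; simp
  rw [hswap]
  have hdisj : Disjoint ((e ×ˢ e).filter (fun p => p.1 < p.2))
      ((e ×ˢ e).filter (fun p => p.2 < p.1)) := by
    rw [Finset.disjoint_left]
    intro p hp1 hp2
    simp only [Finset.mem_filter] at hp1 hp2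
    exact absurd hp2.2 (not_lt.mpr hp1.2.le)
  have := Finset.sum_union hdisj (f := fun p : Fin N × Fin N => a p.1)
  rw [← this]
  have hsub : ((e ×ˢ e).filter (fun p => p.1 < p.2)) ∪ ((e ×ˢ e).filter (fun p => p.2 < p.1))
      ⊆ e ×ˢ e := by
    apply Finset.union_subset <;> exact Finset.filter_subset _ _
  calc _ ≤ ∑ p ∈ e ×ˢ e, a p.1 :=
        Finset.sum_le_sum_of_subset_of_nonneg hsub (fun p _ _ => ha p.1)
    _ = (e.card : ℝ) * ∑ i ∈ e, a i := by
        rw [Finset.sum_product]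
        simp only [Finset.sum_const, nsmul_eq_mul]
        rw [Finset.mul_sum]

lemma feq_le_card_sqrt_norm {N : ℕ} {q : ℝ} (hq : 1 ≤ q) (e : Finset (Fin N))
    (x : EuclideanSpace ℝ (Fin N)) :
    feq q e x ≤ (e.card : ℝ) * Real.sqrt N * ‖x - meanVec x‖ := by
  set y : EuclideanSpace ℝ (Fin N) := x - meanVec x with hy
  have hq0 : 0 < q := by linarith
  have hxy : ∀ i j : Fin N, x i - x j = y i - y j := by
    intro i j
    simp [hy, meanVec]
  -- feq ≤ sum of abs差
  have h1 : feq q e x ≤ ∑ p ∈ (e ×ˢ e).filter (fun p => p.1 < p.2), |x p.1 - x p.2| := by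
    have hs := sum_rpow_le_rpow_sum (s := (e ×ˢ e).filter (fun p => p.1 < p.2))
      (f := fun p => |x p.1 - x p.2|) hq (fun _ _ => abs_nonneg _)
    have hS0 : (0:ℝ) ≤ ∑ p ∈ (e ×ˢ e).filter (fun p => p.1 < p.2), |x p.1 - x p.2| :=
      Finset.sum_nonneg fun _ _ => abs_nonneg _
    have := Real.rpow_le_rpow (Finset.sum_nonneg fun _ _ => Real.rpow_nonneg (abs_nonneg _) q)
      hs (by positivity : (0:ℝ) ≤ 1/q)
    rwa [← Real.rpow_mul hS0, mul_one_div, div_self hq0.ne', Real.rpow_one] at this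
  have h2 : ∑ p ∈ (e ×ˢ e).filter (fun p => p.1 < p.2), |x p.1 - x p.2|
      ≤ ∑ p ∈ (e ×ˢ e).filter (fun p => p.1 < p.2), (|y p.1| + |y p.2|) := by
    apply Finset.sum_le_sum
    intro p _
    rw [hxy p.1 p.2]
    exact abs_sub _ _
  have h3 := pair_sum_le e (fun i => |y i|) (fun i => abs_nonneg _)
  have h4 := sum_abs_le_sqrt_mul_norm e y
  have hcard : Real.sqrt e.card ≤ Real.sqrt N := by
    apply Real.sqrt_le_sqrt
    exact_mod_cast (Finset.card_le_univ e).trans_eq (by simp)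
  calc feq q e x ≤ _ := h1
    _ ≤ _ := h2
    _ ≤ (e.card : ℝ) * ∑ i ∈ e, |y i| := h3
    _ ≤ (e.card : ℝ) * (Real.sqrt e.card * ‖y‖) := by
        apply mul_le_mul_of_nonneg_left h4 (by positivity)
    _ ≤ (e.card : ℝ) * (Real.sqrt N * ‖y‖) := by
        apply mul_le_mul_of_nonneg_left _ (by positivity)
        exact mul_le_mul_of_nonneg_right hcard (norm_nonneg _)
    _ = (e.card : ℝ) * Real.sqrt N * ‖y‖ := by ring

lemma rpow_sum_le_mul_sum_rpow {k : ℕ} {a : ℕ → ℝ} {p : ℝ} (hp : 1 ≤ p)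
    (ha : ∀ l, 0 ≤ a l) :
    (∑ l ∈ Finset.range k, a l) ^ p ≤ (k : ℝ) ^ (p - 1) * ∑ l ∈ Finset.range k, a l ^ p := by
  rcases Nat.eq_zero_or_pos k with hk | hk
  · subst hk
    simp [Real.zero_rpow (by linarith : p ≠ 0)]
  · have hkR : (0:ℝ) < k := by exact_mod_cast hk
    have hw : ∑ _l ∈ Finset.range k, (1:ℝ)/k = 1 := by
      rw [Finset.sum_const, Finset.card_range, nsmul_eq_mul]
      field_simp
    have h := Real.rpow_arith_mean_le_arith_mean_rpow (Finset.range k)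
      (fun _ => (1:ℝ)/k) a (fun _ _ => by positivity) hw (fun l _ => ha l) hp
    -- h : (Σ (1/k) * a l)^p ≤ Σ (1/k) * a l ^ p
    have hL : ∑ l ∈ Finset.range k, (1:ℝ)/k * a l = (1/k) * ∑ l ∈ Finset.range k, a l := by
      rw [Finset.mul_sum]
    have hR : ∑ l ∈ Finset.range k, (1:ℝ)/k * a l ^ p
        = (1/k) * ∑ l ∈ Finset.range k, a l ^ p := by
      rw [Finset.mul_sum]
    rw [hL, hR, Real.mul_rpow (by positivity) (Finset.sum_nonneg fun l _ => ha l)] at h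
    have h2 : ((1:ℝ)/k) ^ p = ((k:ℝ) ^ p)⁻¹ := by
      rw [one_div, Real.inv_rpow hkR.le]
    have hkp : (0:ℝ) < (k:ℝ) ^ p := Real.rpow_pos_of_pos hkR p
    -- (Σ a)^p ≤ k^p * (1/k) * Σ a^p = k^(p-1) Σ a^p
    have h3 : (∑ l ∈ Finset.range k, a l) ^ p
        ≤ (k:ℝ) ^ p * ((1/k) * ∑ l ∈ Finset.range k, a l ^ p) := by
      calc (∑ l ∈ Finset.range k, a l) ^ p
          = (k:ℝ)^p * (((1:ℝ)/k)^p * (∑ l ∈ Finset.range k, a l) ^ p) := by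
            rw [h2, ← mul_assoc, mul_inv_cancel₀ hkp.ne', one_mul]
        _ ≤ (k:ℝ)^p * ((1/k) * ∑ l ∈ Finset.range k, a l ^ p) :=
            mul_le_mul_of_nonneg_left h (le_of_lt hkp)
    calc (∑ l ∈ Finset.range k, a l) ^ p ≤ _ := h3
      _ = ((k:ℝ)^p * (k:ℝ)⁻¹) * ∑ l ∈ Finset.range k, a l ^ p := by ring
      _ = (k : ℝ) ^ (p - 1) * ∑ l ∈ Finset.range k, a l ^ p := by
          rw [← Real.rpow_neg_one (k:ℝ), ← Real.rpow_add hkR, show p + -1 = p - 1 by ring]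

lemma chain_shorten {N : ℕ} (E : Finset (Finset (Fin N))) (i j : Fin N) (k : ℕ)
    (hkle : ∀ m, chained E i j m → k ≤ m) (μ : ℕ → Fin N) (hμ0 : μ 0 = i) (hμk : μ k = j)
    (ε : ℕ → Finset (Fin N))
    (hε : ∀ l < k, ε l ∈ E ∧ μ l ∈ ε l ∧ μ (l+1) ∈ ε l)
    {a b : ℕ} (ha : a < k) (hb : b < k) (hab : a < b) (heq : ε a = ε b) : False := by
  set d := b - a with hd
  have hd1 : 1 ≤ d := by omega
  have hdk : d ≤ k := by omega
  have hchain : chained E i j (k - d) := by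
    refine ⟨fun l => if l ≤ a then μ l else μ (l + d), by simpa using hμ0, ?_, ?_⟩
    · have h1 : ¬ (k - d ≤ a) := by omega
      simp only [h1, if_false]
      have : k - d + d = k := by omega
      rw [this, hμk]
    · intro l hl
      rcases lt_trichotomy l a with hla | hla | hla
      · refine ⟨ε l, (hε l (by omega)).1, ?_, ?_⟩
        · simp only [if_pos (by omega : l ≤ a)]; exact (hε l (by omega)).2.1
        · simp only [if_pos (by omega : l + 1 ≤ a)]; exact (hε l (by omega)).2.2
      · subst hla
        refine ⟨ε l, (hε l (by omega)).1, ?_, ?_⟩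
        · simp only [if_pos (le_refl l)]; exact (hε l (by omega)).2.1
        · have h2 : ¬ (l + 1 ≤ l) := by omega
          simp only [h2, if_false]
          have : l + 1 + d = b + 1 := by omega
          rw [this, heq]
          exact (hε b hb).2.2
      · have h2 : ¬ (l ≤ a) := by omega
        have h3 : ¬ (l + 1 ≤ a) := by omega
        refine ⟨ε (l + d), (hε (l + d) (by omega)).1, ?_, ?_⟩
        · simp only [h2, if_false]; exact (hε (l + d) (by omega)).2.1
        · simp only [h3, if_false]
          have : l + 1 + d = l + d + 1 := by omega
          rw [this]
          exact (hε (l + d) (by omega)).2.2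
  have : k ≤ k - d := hkle _ hchain
  omega

lemma exists_min_chain {N : ℕ} (E : Finset (Finset (Fin N))) (i j : Fin N)
    (h : ∃ k, chained E i j k) :
    ∃ μ : ℕ → Fin N, ∃ ε : ℕ → Finset (Fin N),
      μ 0 = i ∧ μ (hdist E i j) = j ∧
      (∀ l < hdist E i j, ε l ∈ E ∧ μ l ∈ ε l ∧ μ (l+1) ∈ ε l) ∧
      Set.InjOn ε (Finset.range (hdist E i j)) := by
  set k := hdist E i j with hkdef
  have hne : {m | chained E i j m}.Nonempty := h
  have hk : chained E i j k := Nat.sInf_mem hne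
  obtain ⟨μ, hμ0, hμk, hμ⟩ := hk
  classical
  choose! ε hε1 hε2 hε3 using hμ
  have hεall : ∀ l < k, ε l ∈ E ∧ μ l ∈ ε l ∧ μ (l+1) ∈ ε l :=
    fun l hl => ⟨hε1 l hl, hε2 l hl, hε3 l hl⟩
  refine ⟨μ, ε, hμ0, hμk, hεall, ?_⟩
  intro a ha b hb hab
  simp only [Finset.coe_range, Set.mem_Iio] at ha hb
  by_contra hne'
  rcases Ne.lt_or_gt hne' with hlt | hlt
  · exact chain_shorten E i j k (fun m hm => Nat.sInf_le hm) μ hμ0 hμk ε hεall ha hb hlt hab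
  · exact chain_shorten E i j k (fun m hm => Nat.sInf_le hm) μ hμ0 hμk ε hεall hb ha hlt hab.symm

theorem stmt8 (N : ℕ) (E : Finset (Finset (Fin N))) (hE : ∀ e ∈ E, 2 ≤ e.card)
    (hEne : E.Nonempty)
    (w : Finset (Fin N) → ℝ) (hw : ∀ e ∈ E, 0 < w e)
    (hconn : ∀ i j : Fin N, ∃ k, chained E i j k)
    (p q : ℝ) (hp : 1 < p) (hq : 1 < q) (x : EuclideanSpace ℝ (Fin N)) :
    (E.inf' hEne w) / ((N : ℝ) ^ p * (hdiam E : ℝ) ^ (p - 1)) * ‖x - meanVec x‖ ^ p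
        ≤ p * phiq E w p q x ∧
    p * phiq E w p q x ≤
      (∑ e ∈ E, w e * (e.card : ℝ) ^ p) * (N : ℝ) ^ (p/2) * ‖x - meanVec x‖ ^ p := by
  classical
  have hp0 : (0:ℝ) < p := by linarith
  have hq0 : (0:ℝ) < q := by linarith
  set y : EuclideanSpace ℝ (Fin N) := x - meanVec x with hy
  -- p * phiq = plain sum
  have hphi : p * phiq E w p q x = ∑ e ∈ E, w e * feq q e x ^ p := by
    rw [phiq]; field_simp
  set S : ℝ := ∑ e ∈ E, w e * feq q e x ^ p with hS
  have hS0 : 0 ≤ S :=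
    Finset.sum_nonneg fun e he =>
      mul_nonneg (hw e he).le (Real.rpow_nonneg (feq_nonneg q e x) p)
  -- N ≥ 2
  have hN2 : 2 ≤ N := by
    obtain ⟨e, he⟩ := hEne
    calc 2 ≤ e.card := hE e he
      _ ≤ (Finset.univ : Finset (Fin N)).card := Finset.card_le_univ e
      _ = N := by simp
  have hN0 : (0:ℝ) < N := by exact_mod_cast (by omega : 0 < N)
  have hN1 : (1:ℝ) ≤ N := by exact_mod_cast (by omega : 1 ≤ N)
  -- upper bound
  have hupper : S ≤ (∑ e ∈ E, w e * (e.card : ℝ) ^ p) * (N : ℝ) ^ (p/2) * ‖y‖ ^ p := by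
    have hsqrt : Real.sqrt N = (N:ℝ) ^ ((1:ℝ)/2) := by
      rw [Real.sqrt_eq_rpow]
    have step : ∀ e ∈ E, w e * feq q e x ^ p
        ≤ w e * (e.card : ℝ) ^ p * ((N : ℝ) ^ (p/2) * ‖y‖ ^ p) := by
      intro e he
      have h1 : feq q e x ^ p ≤ ((e.card : ℝ) * Real.sqrt N * ‖y‖) ^ p :=
        Real.rpow_le_rpow (feq_nonneg q e x) (feq_le_card_sqrt_norm hq.le e x) hp0.le
      have h2 : ((e.card : ℝ) * Real.sqrt N * ‖y‖) ^ p
          = (e.card : ℝ) ^ p * ((N : ℝ) ^ (p/2) * ‖y‖ ^ p) := by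
        rw [Real.mul_rpow (by positivity) (norm_nonneg _),
          Real.mul_rpow (by positivity) (Real.sqrt_nonneg _), hsqrt,
          ← Real.rpow_mul hN0.le]
        ring_nf
      calc w e * feq q e x ^ p ≤ w e * ((e.card : ℝ) * Real.sqrt N * ‖y‖) ^ p :=
            mul_le_mul_of_nonneg_left h1 (hw e he).le
        _ = w e * (e.card : ℝ) ^ p * ((N : ℝ) ^ (p/2) * ‖y‖ ^ p) := by rw [h2]; ring
    calc S ≤ ∑ e ∈ E, w e * (e.card : ℝ) ^ p * ((N : ℝ) ^ (p/2) * ‖y‖ ^ p) :=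
          Finset.sum_le_sum step
      _ = (∑ e ∈ E, w e * (e.card : ℝ) ^ p) * (N : ℝ) ^ (p/2) * ‖y‖ ^ p := by
          rw [← Finset.sum_mul]; ring
  -- lower bound
  have hlower : (E.inf' hEne w) / ((N : ℝ) ^ p * (hdiam E : ℝ) ^ (p - 1)) * ‖y‖ ^ p ≤ S := by
    set mw : ℝ := E.inf' hEne w with hmw
    have hmw0 : 0 < mw := by
      obtain ⟨e, he, hee⟩ := Finset.exists_mem_eq_inf' hEne w
      rw [hmw, hee]; exact hw e he
    -- diam ≥ 1
    have hdiam1 : 1 ≤ hdiam E := by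
      have hne01 : (⟨0, by omega⟩ : Fin N) ≠ (⟨1, by omega⟩ : Fin N) := by
        simp [Fin.ext_iff]
      set i0 : Fin N := ⟨0, by omega⟩
      set i1 : Fin N := ⟨1, by omega⟩
      have h1 : 1 ≤ hdist E i0 i1 := by
        by_contra hcon
        have h0 : hdist E i0 i1 = 0 := by omega
        have hmem : chained E i0 i1 (hdist E i0 i1) := Nat.sInf_mem (hconn i0 i1)
        rw [h0] at hmem
        obtain ⟨μ, hμ0, hμk, _⟩ := hmem
        exact hne01 (hμ0 ▸ hμk ▸ rfl)
      calc 1 ≤ hdist E i0 i1 := h1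
        _ ≤ Finset.univ.sup fun j => hdist E i0 j :=
            Finset.le_sup (Finset.mem_univ i1)
        _ ≤ hdiam E := Finset.le_sup (f := fun i => Finset.univ.sup fun j => hdist E i j)
            (Finset.mem_univ i0)
    have hD0 : (0:ℝ) < (N : ℝ) ^ p * (hdiam E : ℝ) ^ (p - 1) := by
      have : (0:ℝ) < (hdiam E : ℝ) := by exact_mod_cast hdiam1
      positivity
    rcases eq_or_lt_of_le (norm_nonneg y) with hy0 | hy0
    · rw [← hy0, Real.zero_rpow hp0.ne', mul_zero]
      exact hS0
    -- key: ‖y‖^p ≤ N^p * diam^(p-1) * S / mw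
    · have hkey : ‖y‖ ^ p ≤ (N : ℝ) ^ p * (hdiam E : ℝ) ^ (p - 1) * S / mw := by
        -- mean zero
        have hsum0 : ∑ i, y i = 0 := by
          have : ∀ i, y i = x i - (∑ i, x i) / N := by
            intro i; simp [hy, meanVec]
          rw [Finset.sum_congr rfl fun i _ => this i, Finset.sum_sub_distrib,
            Finset.sum_const]
          simp
          field_simp
          simp
        -- argmax
        have huniv : (Finset.univ : Finset (Fin N)).Nonempty := by
          have : Nonempty (Fin N) := ⟨⟨0, by omega⟩⟩
          exact Finset.univ_nonempty
        obtain ⟨i0, _, hi0⟩ := Finset.exists_max_image Finset.univ (fun i => |y i|) huniv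
        -- ‖y‖ ≤ √N |y i0|
        have hnorm : ‖y‖ ≤ Real.sqrt N * |y i0| := by
          rw [EuclideanSpace.norm_eq]
          have h1 : ∑ i, ‖y i‖ ^ 2 ≤ (N:ℝ) * |y i0| ^ 2 := by
            calc ∑ i, ‖y i‖ ^ 2 ≤ ∑ _i : Fin N, |y i0| ^ 2 := by
                  apply Finset.sum_le_sum
                  intro i _
                  rw [Real.norm_eq_abs]
                  exact pow_le_pow_left₀ (abs_nonneg _) (hi0 i (Finset.mem_univ i)) 2
              _ = (N:ℝ) * |y i0| ^ 2 := by
                  rw [Finset.sum_const, Finset.card_univ]; simp [nsmul_eq_mul]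
          calc Real.sqrt (∑ i, ‖y i‖ ^ 2) ≤ Real.sqrt ((N:ℝ) * |y i0| ^ 2) :=
                Real.sqrt_le_sqrt h1
            _ = Real.sqrt N * |y i0| := by
                rw [Real.sqrt_mul hN0.le, Real.sqrt_sq (abs_nonneg _)]
        -- pick opposite sign j
        have hyne : y i0 ≠ 0 := by
          intro h0
          have : ∀ i, y i = 0 := fun i => by
            have := hi0 i (Finset.mem_univ i)
            rw [h0, abs_zero] at this
            exact abs_eq_zero.mp (le_antisymm this (abs_nonneg _))
          have : y = 0 := by ext i; exact this i
          rw [this] at hy0; simp at hy0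
        have hj : ∃ j : Fin N, |y i0| ≤ |y i0 - y j| := by
          rcases lt_or_gt_of_ne hyne with hneg | hpos
          · by_cases hex : ∃ j, 0 ≤ y j
            · obtain ⟨j, hjp⟩ := hex
              exact ⟨j, by rw [abs_of_neg hneg, abs_sub_comm, abs_of_nonneg (by linarith)]; linarith⟩
            · push_neg at hex
              have : ∑ i, y i < 0 := Finset.sum_neg (fun i _ => hex i) huniv
              linarith [hsum0 ▸ this]
          · by_cases hex : ∃ j, y j ≤ 0
            · obtain ⟨j, hjp⟩ := hex
              exact ⟨j, by rw [abs_of_pos hpos, abs_of_nonneg (by linarith)]; linarith⟩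
            · push_neg at hex
              have : 0 < ∑ i, y i := Finset.sum_pos (fun i _ => hex i) huniv
              linarith [hsum0 ▸ this]
        obtain ⟨j, hjle⟩ := hj
        -- chain
        obtain ⟨μ, ε, hμ0, hμk, hε, hεinj⟩ := exists_min_chain E i0 j (hconn i0 j)
        set k : ℕ := hdist E i0 j with hkdef
        have hkdiam : k ≤ hdiam E :=
          le_trans (Finset.le_sup (f := fun j => hdist E i0 j) (Finset.mem_univ j))
            (Finset.le_sup (f := fun i => Finset.univ.sup fun j => hdist E i j)
              (Finset.mem_univ i0))
        -- telescoping
        have hxy : ∀ a b : Fin N, y a - y b = x a - x b := by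
          intro a b; simp [hy, meanVec]
        have htel : |y i0 - y j| ≤ ∑ l ∈ Finset.range k, feq q (ε l) x := by
          have h1 : y i0 - y j = ∑ l ∈ Finset.range k, (y (μ l) - y (μ (l+1))) := by
            rw [Finset.sum_range_sub' (fun l => y (μ l)) k, hμ0, hμk]
          calc |y i0 - y j| = |∑ l ∈ Finset.range k, (y (μ l) - y (μ (l+1)))| := by rw [h1]
            _ ≤ ∑ l ∈ Finset.range k, |y (μ l) - y (μ (l+1))| :=
                Finset.abs_sum_le_sum_abs _ _
            _ ≤ ∑ l ∈ Finset.range k, feq q (ε l) x := by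
                apply Finset.sum_le_sum
                intro l hl
                rw [Finset.mem_range] at hl
                obtain ⟨he, hm1, hm2⟩ := hε l hl
                rw [hxy]
                exact abs_sub_le_feq hq0 hm1 hm2 x
        -- sum over chain ≤ S / mw
        have hchainS : ∑ l ∈ Finset.range k, feq q (ε l) x ^ p ≤ S / mw := by
          rw [le_div_iff₀ hmw0, Finset.sum_mul]
          have h1 : ∀ l ∈ Finset.range k, feq q (ε l) x ^ p * mw
              ≤ w (ε l) * feq q (ε l) x ^ p := by
            intro l hl
            rw [Finset.mem_range] at hl
            rw [mul_comm]
            exact mul_le_mul_of_nonneg_right (Finset.inf'_le w (hε l hl).1)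
              (Real.rpow_nonneg (feq_nonneg q (ε l) x) p)
          calc ∑ l ∈ Finset.range k, feq q (ε l) x ^ p * mw
              ≤ ∑ l ∈ Finset.range k, w (ε l) * feq q (ε l) x ^ p := Finset.sum_le_sum h1
            _ = ∑ e ∈ (Finset.range k).image ε, w e * feq q e x ^ p := by
                rw [Finset.sum_image (fun a ha b hb hab =>
                  hεinj (Finset.mem_coe.mpr ha) (Finset.mem_coe.mpr hb) hab)]
            _ ≤ S := by
                apply Finset.sum_le_sum_of_subset_of_nonneg
                · intro e he
                  rw [Finset.mem_image] at he
                  obtain ⟨l, hl, rfl⟩ := he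
                  exact (hε l (Finset.mem_range.mp hl)).1
                · exact fun e he _ =>
                    mul_nonneg (hw e he).le (Real.rpow_nonneg (feq_nonneg q e x) p)
        -- power mean
        have hpm : (∑ l ∈ Finset.range k, feq q (ε l) x) ^ p
            ≤ (k:ℝ) ^ (p-1) * ∑ l ∈ Finset.range k, feq q (ε l) x ^ p :=
          rpow_sum_le_mul_sum_rpow hp.le (fun l => feq_nonneg q (ε l) x)
        have hkr : (k:ℝ) ^ (p-1) ≤ (hdiam E : ℝ) ^ (p-1) :=
          Real.rpow_le_rpow (by positivity) (by exact_mod_cast hkdiam) (by linarith)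
        have hchain_nonneg : 0 ≤ ∑ l ∈ Finset.range k, feq q (ε l) x :=
          Finset.sum_nonneg fun l _ => feq_nonneg q (ε l) x
        calc ‖y‖ ^ p ≤ (Real.sqrt N * |y i0|) ^ p :=
              Real.rpow_le_rpow (norm_nonneg _) hnorm hp0.le
          _ = (Real.sqrt N) ^ p * |y i0| ^ p :=
              Real.mul_rpow (Real.sqrt_nonneg _) (abs_nonneg _)
          _ ≤ (Real.sqrt N) ^ p * (∑ l ∈ Finset.range k, feq q (ε l) x) ^ p := by
              apply mul_le_mul_of_nonneg_left _ (by positivity)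
              exact Real.rpow_le_rpow (abs_nonneg _) (hjle.trans htel) hp0.le
          _ ≤ (Real.sqrt N) ^ p *
                ((k:ℝ) ^ (p-1) * (∑ l ∈ Finset.range k, feq q (ε l) x ^ p)) := by
              apply mul_le_mul_of_nonneg_left hpm (by positivity)
          _ ≤ (Real.sqrt N) ^ p * ((hdiam E : ℝ) ^ (p-1) * (S / mw)) := by
              apply mul_le_mul_of_nonneg_left _ (by positivity)
              apply mul_le_mul hkr hchainS
                (Finset.sum_nonneg fun l _ => Real.rpow_nonneg (feq_nonneg q (ε l) x) p)
                (by positivity)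
          _ ≤ (N:ℝ) ^ p * ((hdiam E : ℝ) ^ (p-1) * (S / mw)) := by
              have hsq : (Real.sqrt N) ^ p = (N:ℝ) ^ (p/2) := by
                rw [Real.sqrt_eq_rpow, ← Real.rpow_mul hN0.le,
                  show (1:ℝ)/2 * p = p/2 by ring]
              have hle2 : (Real.sqrt N) ^ p ≤ (N:ℝ) ^ p := by
                rw [hsq]
                exact Real.rpow_le_rpow_of_exponent_le hN1 (by linarith)
              have h1 : (0:ℝ) ≤ (hdiam E : ℝ) ^ (p-1) := by positivity
              have h2 : (0:ℝ) ≤ S / mw := div_nonneg hS0 hmw0.le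
              exact mul_le_mul_of_nonneg_right hle2 (by positivity)
          _ = (N : ℝ) ^ p * (hdiam E : ℝ) ^ (p - 1) * S / mw := by ring
      rw [div_mul_eq_mul_div, div_le_iff₀ hD0]
      calc mw * ‖y‖ ^ p ≤ mw * ((N : ℝ) ^ p * (hdiam E : ℝ) ^ (p - 1) * S / mw) :=
            mul_le_mul_of_nonneg_left hkey hmw0.le
        _ = S * ((N : ℝ) ^ p * (hdiam E : ℝ) ^ (p - 1)) := by
            field_simp
  rw [hphi]
  exact ⟨hlower, hupper⟩
end

section
/- Let x : [0,∞) → ℝ^N be a C¹ solution of x'(t) + Dφ_{G,p,q}(x(t)) = 0 with p = 2, q > 1, and G connected. Then the mean x̄(t) is constant in t, and X(t) := ‖x(t) − x̄(0)‖ satisfies X(0) e^{−Γ_{G,2} t} ≤ X(t) ≤ X(0) e^{−γ_{G,2} t} for all t ≥ 0, where γ_{G,2}, Γ_{G,2} are the Poincaré constants with γ_{G,2}‖z − z̄‖² ≤ 2φ_{G,2,q}(z) ≤ Γ_{G,2}‖z − z̄‖² for all z ∈ ℝ^N. -/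
open Finset Real Filter
open scoped RealInnerProductSpace

/-! ### Auxiliary material -/

noncomputable def Spair {N : ℕ} (q : ℝ) (P : Finset (Fin N × Fin N))
    (x : EuclideanSpace ℝ (Fin N)) : ℝ :=
  ∑ p ∈ P, |x p.1 - x p.2| ^ q

lemma Spair_nonneg {N : ℕ} (q : ℝ) (P : Finset (Fin N × Fin N))
    (x : EuclideanSpace ℝ (Fin N)) : 0 ≤ Spair q P x :=
  Finset.sum_nonneg fun _ _ => Real.rpow_nonneg (abs_nonneg _) q

lemma Spair_differentiable {N : ℕ} {q : ℝ} (hq : 1 < q) (P : Finset (Fin N × Fin N)) :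
    Differentiable ℝ (Spair (N := N) q P) := by
  apply Differentiable.fun_sum
  intro p _
  have h1 : Differentiable ℝ (fun x : EuclideanSpace ℝ (Fin N) => x p.1 - x p.2) :=
    ((EuclideanSpace.proj (𝕜 := ℝ) p.1).differentiable).fun_sub ((EuclideanSpace.proj (𝕜 := ℝ) p.2).differentiable)
  exact fun x => ((hasDerivAt_abs_rpow (x p.1 - x p.2) hq).differentiableAt).comp (g := fun y : ℝ => |y| ^ q) x (h1 x)

lemma coord_le_norm {N : ℕ} (h : EuclideanSpace ℝ (Fin N)) (i : Fin N) : |h i| ≤ ‖h‖ := by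
  rw [EuclideanSpace.norm_eq]
  rw [← Real.sqrt_sq_eq_abs]
  apply Real.sqrt_le_sqrt
  rw [← Finset.sum_erase_add _ _ (Finset.mem_univ i)]
  have : (0:ℝ) ≤ ∑ j ∈ Finset.univ.erase i, ‖h j‖ ^ 2 :=
    Finset.sum_nonneg fun j _ => sq_nonneg _
  simp only [Real.norm_eq_abs, sq_abs] at *
  linarith

lemma Fe_differentiable {N : ℕ} {q : ℝ} (hq : 1 < q) (P : Finset (Fin N × Fin N)) :
    Differentiable ℝ (fun x : EuclideanSpace ℝ (Fin N) => Spair q P x ^ (2/q)) := by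
  intro x
  have hq0 : (0:ℝ) < q := by linarith
  rcases eq_or_ne (Spair q P x) 0 with h0 | hne
  · have hzero : ∀ p ∈ P, x p.1 = x p.2 := by
      intro p hp
      have := (Finset.sum_eq_zero_iff_of_nonneg
        (fun p _ => Real.rpow_nonneg (abs_nonneg _) q)).1 h0 p hp
      have h2 : |x p.1 - x p.2| = 0 := by
        by_contra hc
        exact hc (by
          have := Real.rpow_eq_zero_iff_of_nonneg (abs_nonneg (x p.1 - x p.2)) |>.1 this
          exact this.1)
      have := abs_eq_zero.1 h2
      linarith [sub_eq_zero.1 this]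
    have key : ∀ h : EuclideanSpace ℝ (Fin N),
        Spair q P (x + h) = Spair q P h := by
      intro h
      unfold Spair
      apply Finset.sum_congr rfl
      intro p hp
      have : (x + h) p.1 - (x + h) p.2 = h p.1 - h p.2 := by
        simp only [PiLp.add_apply]
        rw [hzero p hp]; ring
      rw [this]
    have hb : ∀ h : EuclideanSpace ℝ (Fin N),
        Spair q P h ^ (2/q) ≤ ((P.card : ℝ) ^ (2/q) * 4) * ‖h‖ ^ 2 := by
      intro h
      have hbd : Spair q P h ≤ (P.card : ℝ) * (2 * ‖h‖) ^ q := by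
        unfold Spair
        calc ∑ p ∈ P, |h p.1 - h p.2| ^ q ≤ ∑ _p ∈ P, (2 * ‖h‖) ^ q := by
              apply Finset.sum_le_sum
              intro p _
              apply Real.rpow_le_rpow (abs_nonneg _) _ hq0.le
              calc |h p.1 - h p.2| ≤ |h p.1| + |h p.2| := abs_sub _ _
                _ ≤ ‖h‖ + ‖h‖ := add_le_add (coord_le_norm h p.1) (coord_le_norm h p.2)
                _ = 2 * ‖h‖ := by ring
          _ = (P.card : ℝ) * (2 * ‖h‖) ^ q := by rw [Finset.sum_const, nsmul_eq_mul]
      calc Spair q P h ^ (2/q) ≤ ((P.card : ℝ) * (2 * ‖h‖) ^ q) ^ (2/q) := by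
            apply Real.rpow_le_rpow (Spair_nonneg q P h) hbd (by positivity)
        _ = (P.card : ℝ) ^ (2/q) * ((2 * ‖h‖) ^ q) ^ (2/q) := by
            rw [Real.mul_rpow (Nat.cast_nonneg _) (Real.rpow_nonneg (by positivity) q)]
        _ = (P.card : ℝ) ^ (2/q) * (2 * ‖h‖) ^ (2:ℝ) := by
            rw [← Real.rpow_mul (by positivity)]
            congr 1
            field_simp
        _ = ((P.card : ℝ) ^ (2/q) * 4) * ‖h‖ ^ 2 := by
            have h2 : (2 * ‖h‖) ^ (2:ℝ) = (2*‖h‖)^(2:ℕ) := by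
              rw [← Real.rpow_natCast (2*‖h‖) 2]; norm_num
            rw [h2]; ring
    have : HasFDerivAt (fun y : EuclideanSpace ℝ (Fin N) => Spair q P y ^ (2/q))
        (0 : EuclideanSpace ℝ (Fin N) →L[ℝ] ℝ) x := by
      rw [hasFDerivAt_iff_isLittleO_nhds_zero]
      simp only [h0, ContinuousLinearMap.zero_apply, sub_zero,
        Real.zero_rpow (by positivity : (2:ℝ)/q ≠ 0)]
      rw [Asymptotics.isLittleO_iff]
      intro c hc
      set C : ℝ := (P.card : ℝ) ^ (2/q) * 4 with hC
      have hC0 : 0 ≤ C := by positivity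
      have hball : ∀ᶠ h : EuclideanSpace ℝ (Fin N) in nhds 0, ‖h‖ < c / (C + 1) := by
        have : Metric.ball (0 : EuclideanSpace ℝ (Fin N)) (c / (C+1)) ∈
            nhds (0 : EuclideanSpace ℝ (Fin N)) :=
          Metric.ball_mem_nhds 0 (by positivity)
        filter_upwards [this] with h hh
        simpa [dist_eq_norm] using hh
      filter_upwards [hball] with h hh
      rw [key h, Real.norm_eq_abs, abs_of_nonneg (Real.rpow_nonneg (Spair_nonneg q P h) _)]
      calc Spair q P h ^ (2/q) ≤ C * ‖h‖ ^ 2 := hb h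
        _ = C * ‖h‖ * ‖h‖ := by ring
        _ ≤ (C + 1) * (c / (C+1)) * ‖h‖ := by
            apply mul_le_mul_of_nonneg_right _ (norm_nonneg h)
            apply mul_le_mul (by linarith) hh.le (norm_nonneg h) (by positivity)
        _ = c * ‖h‖ := by field_simp
    exact this.differentiableAt
  · exact ((Spair_differentiable hq P x).rpow_const (Or.inl hne))

def oneV (N : ℕ) : EuclideanSpace ℝ (Fin N) := WithLp.toLp 2 (fun _ => (1:ℝ))

lemma Spair_translate {N : ℕ} (q : ℝ) (P : Finset (Fin N × Fin N))
    (x : EuclideanSpace ℝ (Fin N)) (c : ℝ) :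
    Spair q P (x + c • oneV N) = Spair q P x := by
  unfold Spair
  apply Finset.sum_congr rfl
  intro p _
  congr 1
  simp [oneV, PiLp.add_apply, PiLp.smul_apply]

lemma Spair_smul {N : ℕ} {q : ℝ} (hq : 0 < q) (P : Finset (Fin N × Fin N))
    (x : EuclideanSpace ℝ (Fin N)) (s : ℝ) :
    Spair q P (s • x) = |s| ^ q * Spair q P x := by
  unfold Spair
  rw [Finset.mul_sum]
  apply Finset.sum_congr rfl
  intro p _
  have : (s • x) p.1 - (s • x) p.2 = s * (x p.1 - x p.2) := by
    simp [PiLp.smul_apply]; ring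
  rw [this, abs_mul, Real.mul_rpow (abs_nonneg _) (abs_nonneg _)]

lemma phiq_eq {N : ℕ} (E : Finset (Finset (Fin N))) (w : Finset (Fin N) → ℝ) {q : ℝ}
    (hq : 1 < q) (x : EuclideanSpace ℝ (Fin N)) :
    phiq E w 2 q x =
      (1/2) * ∑ e ∈ E, w e * Spair q ((e ×ˢ e).filter (fun p => p.1 < p.2)) x ^ (2/q) := by
  unfold phiq feq
  congr 1
  apply Finset.sum_congr rfl
  intro e _
  congr 1
  show (Spair q ((e ×ˢ e).filter fun p => p.1 < p.2) x ^ (1/q)) ^ (2:ℝ)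
    = Spair q ((e ×ˢ e).filter fun p => p.1 < p.2) x ^ (2/q)
  rw [← Real.rpow_mul (Spair_nonneg q _ x)]
  congr 1
  ring

lemma phiq_differentiable {N : ℕ} (E : Finset (Finset (Fin N))) (w : Finset (Fin N) → ℝ)
    {q : ℝ} (hq : 1 < q) : Differentiable ℝ (phiq E w 2 q) := by
  have : phiq E w 2 q = fun x =>
      (1/2) * ∑ e ∈ E, w e * Spair q ((e ×ˢ e).filter (fun p => p.1 < p.2)) x ^ (2/q) :=
    funext (phiq_eq E w hq)
  rw [this]
  apply Differentiable.const_mul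
  apply Differentiable.fun_sum
  intro e _
  exact (Fe_differentiable hq _).const_mul _

lemma phiq_translate {N : ℕ} (E : Finset (Finset (Fin N))) (w : Finset (Fin N) → ℝ)
    {q : ℝ} (hq : 1 < q) (x : EuclideanSpace ℝ (Fin N)) (c : ℝ) :
    phiq E w 2 q (x + c • oneV N) = phiq E w 2 q x := by
  rw [phiq_eq E w hq, phiq_eq E w hq]
  congr 1
  apply Finset.sum_congr rfl
  intro e _
  rw [Spair_translate]

lemma phiq_smul {N : ℕ} (E : Finset (Finset (Fin N))) (w : Finset (Fin N) → ℝ)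
    {q : ℝ} (hq : 1 < q) (x : EuclideanSpace ℝ (Fin N)) (s : ℝ) :
    phiq E w 2 q (s • x) = s ^ 2 * phiq E w 2 q x := by
  have hq0 : (0:ℝ) < q := by linarith
  rw [phiq_eq E w hq, phiq_eq E w hq]
  rw [Finset.mul_sum, Finset.mul_sum, Finset.mul_sum]
  apply Finset.sum_congr rfl
  intro e _
  rw [Spair_smul hq0,
    Real.mul_rpow (Real.rpow_nonneg (abs_nonneg s) q) (Spair_nonneg q _ x),
    ← Real.rpow_mul (abs_nonneg s)]
  have h1 : q * (2/q) = 2 := by field_simp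
  have h2 : |s| ^ (q * (2/q)) = s ^ 2 := by
    rw [h1]
    rw [show ((2:ℝ)) = ((2:ℕ):ℝ) from by norm_num, Real.rpow_natCast, sq_abs]
  rw [h2]; ring

lemma gradient_inner_eq {N : ℕ} (f : EuclideanSpace ℝ (Fin N) → ℝ)
    (z v : EuclideanSpace ℝ (Fin N)) :
    ⟪gradient f z, v⟫ = fderiv ℝ f z v := by
  unfold gradient
  exact InnerProductSpace.toDual_symm_apply

lemma fderiv_translate_zero {N : ℕ} {f : EuclideanSpace ℝ (Fin N) → ℝ}
    (hf : Differentiable ℝ f) (v : EuclideanSpace ℝ (Fin N))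
    (hinv : ∀ (z : EuclideanSpace ℝ (Fin N)) (c : ℝ), f (z + c • v) = f z)
    (z : EuclideanSpace ℝ (Fin N)) : fderiv ℝ f z v = 0 := by
  have hin : HasDerivAt (fun s : ℝ => z + s • v) v 0 := by
    simpa using ((hasDerivAt_id (0:ℝ)).smul_const v).const_add z
  have h1 : HasDerivAt (fun s : ℝ => f (z + s • v)) (fderiv ℝ f z v) 0 := by
    have := ((hf (z + (0:ℝ) • v)).hasFDerivAt).comp_hasDerivAt 0 hin
    rw [zero_smul, add_zero] at this; exact this
  have h2 : (fun s : ℝ => f (z + s • v)) = fun _ => f z := funext fun s => hinv z s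
  rw [h2] at h1
  exact h1.unique (hasDerivAt_const 0 _)

lemma fderiv_euler {N : ℕ} {f : EuclideanSpace ℝ (Fin N) → ℝ}
    (hf : Differentiable ℝ f)
    (hhom : ∀ (s : ℝ) (z : EuclideanSpace ℝ (Fin N)), f (s • z) = s ^ 2 * f z)
    (z : EuclideanSpace ℝ (Fin N)) : fderiv ℝ f z z = 2 * f z := by
  have hin : HasDerivAt (fun s : ℝ => s • z) z 1 := by
    simpa using (hasDerivAt_id (1:ℝ)).smul_const z
  have h1 : HasDerivAt (fun s : ℝ => f (s • z)) (fderiv ℝ f z z) 1 := by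
    have := ((hf ((1:ℝ) • z)).hasFDerivAt).comp_hasDerivAt 1 hin
    rw [one_smul] at this; exact this
  have h2 : HasDerivAt (fun s : ℝ => s ^ 2 * f z) (2 * f z) 1 := by
    have := (hasDerivAt_pow 2 (1:ℝ)).mul_const (f z)
    simpa using this
  have h3 : (fun s : ℝ => f (s • z)) = fun s : ℝ => s ^ 2 * f z :=
    funext fun s => hhom s z
  rw [h3] at h1
  exact h1.unique h2

theorem stmt19 (N : ℕ) (hN : 0 < N) (E : Finset (Finset (Fin N))) (hE : ∀ e ∈ E, 2 ≤ e.card)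
    (w : Finset (Fin N) → ℝ) (hw : ∀ e ∈ E, 0 < w e)
    (hconn : ∀ i j : Fin N, ∃ k, chained E i j k)
    (q : ℝ) (hq : 1 < q) (γ Γ : ℝ) (hγ : 0 < γ) (hΓ : 0 < Γ)
    (hPoin : ∀ z : EuclideanSpace ℝ (Fin N),
      γ * ‖z - meanVec z‖ ^ 2 ≤ 2 * phiq E w 2 q z ∧
      2 * phiq E w 2 q z ≤ Γ * ‖z - meanVec z‖ ^ 2)
    (x : ℝ → EuclideanSpace ℝ (Fin N))
    (hx : ∀ t : ℝ, 0 ≤ t → HasDerivAt x (-(gradient (phiq E w 2 q) (x t))) t) :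
    (∀ t : ℝ, 0 ≤ t → meanVec (x t) = meanVec (x 0)) ∧
    (∀ t : ℝ, 0 ≤ t →
      ‖x 0 - meanVec (x 0)‖ * Real.exp (-(Γ * t)) ≤ ‖x t - meanVec (x 0)‖ ∧
      ‖x t - meanVec (x 0)‖ ≤ ‖x 0 - meanVec (x 0)‖ * Real.exp (-(γ * t))) := by
  set φ := phiq E w 2 q with hφdef
  have hdiff : Differentiable ℝ φ := phiq_differentiable E w hq
  have hgrad : ∀ z v : EuclideanSpace ℝ (Fin N), ⟪gradient φ z, v⟫ = fderiv ℝ φ z v :=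
    fun z v => gradient_inner_eq φ z v
  have hone : ∀ z : EuclideanSpace ℝ (Fin N), fderiv ℝ φ z (oneV N) = 0 :=
    fderiv_translate_zero hdiff (oneV N) (fun z c => phiq_translate E w hq z c)
  have heuler : ∀ z : EuclideanSpace ℝ (Fin N), fderiv ℝ φ z z = 2 * φ z :=
    fderiv_euler hdiff (fun s z => phiq_smul E w hq z s)
  have hsum : ∀ v : EuclideanSpace ℝ (Fin N), ⟪v, oneV N⟫ = ∑ i, v i := by
    intro v
    simp [PiLp.inner_apply, oneV]
  -- mean conservation
  have hm : ∀ t : ℝ, 0 ≤ t → HasDerivAt (fun t => ⟪x t, oneV N⟫) 0 t := by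
    intro t ht
    have := HasDerivAt.inner (𝕜 := ℝ) (hx t ht) (hasDerivAt_const t (oneV N))
    simpa [inner_neg_left, hgrad, hone] using this
  have hmconst : ∀ t : ℝ, 0 ≤ t → (∑ i, x t i) = ∑ i, x 0 i := by
    intro t ht
    have h := constant_of_has_deriv_right_zero (f := fun t => ⟪x t, oneV N⟫) (a := 0) (b := t)
      (fun s hs => ((hm s hs.1).continuousAt).continuousWithinAt)
      (fun s hs => (hm s hs.1).hasDerivWithinAt)
      t ⟨ht, le_refl t⟩
    simp only [hsum] at h
    exact h
  have part1 : ∀ t : ℝ, 0 ≤ t → meanVec (x t) = meanVec (x 0) := by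
    intro t ht
    ext i
    show (∑ i, x t i) / N = (∑ i, x 0 i) / N
    rw [hmconst t ht]
  refine ⟨part1, ?_⟩
  set m0 : EuclideanSpace ℝ (Fin N) := meanVec (x 0) with hm0
  have hm0rep : m0 = ((∑ i, x 0 i) / N) • oneV N := by
    ext i
    simp [hm0, meanVec, oneV, PiLp.smul_apply]
  have hfm0 : ∀ z : EuclideanSpace ℝ (Fin N), fderiv ℝ φ z m0 = 0 := by
    intro z
    rw [hm0rep, map_smul, hone, smul_eq_mul, mul_zero]
  -- energy
  set u : ℝ → ℝ := fun t => ⟪x t - m0, x t - m0⟫ with hudef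
  have hu_eq : ∀ t, u t = ‖x t - m0‖ ^ 2 := fun t => real_inner_self_eq_norm_sq _
  have hu_nonneg : ∀ t, 0 ≤ u t := fun t => (hu_eq t) ▸ sq_nonneg _
  have hu' : ∀ t : ℝ, 0 ≤ t → HasDerivAt u (-(4 * φ (x t))) t := by
    intro t ht
    have hder : HasDerivAt (fun t => x t - m0) (-(gradient φ (x t))) t :=
      (hx t ht).sub_const m0
    have h := HasDerivAt.inner (𝕜 := ℝ) hder hder
    have key : ⟪gradient φ (x t), x t - m0⟫ = 2 * φ (x t) := by
      rw [hgrad, map_sub, heuler, hfm0, sub_zero]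
    have : ⟪x t - m0, -gradient φ (x t)⟫ + ⟪-gradient φ (x t), x t - m0⟫
        = -(4 * φ (x t)) := by
      rw [inner_neg_left, inner_neg_right, real_inner_comm (gradient φ (x t)) (x t - m0), key]
      ring
    rw [this] at h
    exact h
  -- Poincaré along the flow
  have hP : ∀ t : ℝ, 0 ≤ t → γ * u t ≤ 2 * φ (x t) ∧ 2 * φ (x t) ≤ Γ * u t := by
    intro t ht
    have h1 := (hPoin (x t)).1
    have h2 := (hPoin (x t)).2
    rw [part1 t ht] at h1 h2
    rw [hu_eq]
    exact ⟨h1, h2⟩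
  -- exponential factors
  have hexp : ∀ (a t : ℝ), HasDerivAt (fun t => Real.exp (a * t)) (a * Real.exp (a * t)) t := by
    intro a t
    have := ((hasDerivAt_id t).const_mul a).exp
    simpa [mul_comm] using this
  -- upper bound : u t ≤ u 0 * exp (-(2 γ t))
  have hupper : ∀ t : ℝ, 0 ≤ t → u t * Real.exp (2 * γ * t) ≤ u 0 := by
    intro t ht
    have hA : ∀ s : ℝ, 0 ≤ s → HasDerivAt (fun r => u r * Real.exp (2 * γ * r))
        ((-(4 * φ (x s))) * Real.exp (2 * γ * s) + u s * (2 * γ * Real.exp (2 * γ * s))) s :=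
      fun s hs => (hu' s hs).mul (hexp (2*γ) s)
    have hanti : AntitoneOn (fun r => u r * Real.exp (2 * γ * r)) (Set.Ici 0) := by
      apply antitoneOn_of_deriv_nonpos (convex_Ici 0)
      · exact fun s hs => ((hA s hs).continuousAt).continuousWithinAt
      · intro s hs
        rw [interior_Ici] at hs
        exact ((hA s (le_of_lt hs)).differentiableAt).differentiableWithinAt
      · intro s hs
        rw [interior_Ici] at hs
        rw [(hA s (le_of_lt hs)).deriv]
        have := (hP s (le_of_lt hs)).1
        have hpos : 0 < Real.exp (2 * γ * s) := Real.exp_pos _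
        nlinarith
    have := hanti (Set.self_mem_Ici) (Set.mem_Ici.2 ht) ht
    simpa using this
  -- lower bound : u 0 ≤ u t * exp (2 Γ t)
  have hlower : ∀ t : ℝ, 0 ≤ t → u 0 ≤ u t * Real.exp (2 * Γ * t) := by
    intro t ht
    have hA : ∀ s : ℝ, 0 ≤ s → HasDerivAt (fun r => u r * Real.exp (2 * Γ * r))
        ((-(4 * φ (x s))) * Real.exp (2 * Γ * s) + u s * (2 * Γ * Real.exp (2 * Γ * s))) s :=
      fun s hs => (hu' s hs).mul (hexp (2*Γ) s)
    have hmono : MonotoneOn (fun r => u r * Real.exp (2 * Γ * r)) (Set.Ici 0) := by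
      apply monotoneOn_of_deriv_nonneg (convex_Ici 0)
      · exact fun s hs => ((hA s hs).continuousAt).continuousWithinAt
      · intro s hs
        rw [interior_Ici] at hs
        exact ((hA s (le_of_lt hs)).differentiableAt).differentiableWithinAt
      · intro s hs
        rw [interior_Ici] at hs
        rw [(hA s (le_of_lt hs)).deriv]
        have := (hP s (le_of_lt hs)).2
        have hpos : 0 < Real.exp (2 * Γ * s) := Real.exp_pos _
        nlinarith
    have := hmono (Set.self_mem_Ici) (Set.mem_Ici.2 ht) ht
    simpa using this
  -- conclusion
  intro t ht
  have hexpsq : ∀ a : ℝ, Real.exp a ^ 2 = Real.exp (2 * a) := by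
    intro a
    rw [sq, ← Real.exp_add]; ring_nf
  constructor
  · -- lower
    have hsq : (‖x 0 - m0‖ * Real.exp (-(Γ * t))) ^ 2 ≤ ‖x t - m0‖ ^ 2 := by
      rw [mul_pow, hexpsq, ← hu_eq, ← hu_eq]
      have h1 : u 0 ≤ u t * Real.exp (2 * Γ * t) := hlower t ht
      have h2 : Real.exp (2 * -(Γ * t)) = (Real.exp (2 * Γ * t))⁻¹ := by
        rw [← Real.exp_neg]; ring_nf
      rw [h2]
      calc u 0 * (Real.exp (2*Γ*t))⁻¹ ≤ (u t * Real.exp (2*Γ*t)) * (Real.exp (2*Γ*t))⁻¹ := by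
            apply mul_le_mul_of_nonneg_right h1 (by positivity)
        _ = u t := by field_simp
    have := Real.sqrt_le_sqrt hsq
    rwa [Real.sqrt_sq (by positivity), Real.sqrt_sq (norm_nonneg _)] at this
  · -- upper
    have hsq : ‖x t - m0‖ ^ 2 ≤ (‖x 0 - m0‖ * Real.exp (-(γ * t))) ^ 2 := by
      rw [mul_pow, hexpsq, ← hu_eq, ← hu_eq]
      have h1 : u t * Real.exp (2 * γ * t) ≤ u 0 := hupper t ht
      have h2 : Real.exp (2 * -(γ * t)) = (Real.exp (2 * γ * t))⁻¹ := by
        rw [← Real.exp_neg]; ring_nf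
      rw [h2]
      calc u t = (u t * Real.exp (2*γ*t)) * (Real.exp (2*γ*t))⁻¹ := by field_simp
        _ ≤ u 0 * (Real.exp (2*γ*t))⁻¹ := by
            apply mul_le_mul_of_nonneg_right h1 (by positivity)
    have := Real.sqrt_le_sqrt hsq
    rwa [Real.sqrt_sq (norm_nonneg _), Real.sqrt_sq (by positivity)] at this
end
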